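/- arXiv:2205.05229 — 2 statements merged into one kernel-verified Lean document; each statement's English description precedes it below -/
import Mathlib

section
/- Let M ∈ ℕ, s ∈ [1,2], q ∈ [s,∞), and let ξ_1,...,ξ_M be i.i.d. integrable real random variables on a probability space (Ω,F,P) with E[|ξ_1|^q] < ∞. Then there is a constant Θ_{q,s} (depending only on q and s, not on M or the ξ_j) such that E[ |E[ξ_1] - (1/M) Σ_{j=1}^M ξ_j|^q ]^{1/q} ≤ (Θ_{q,s}/M^{1-1/s}) · E[ |ξ_1 - E[ξ_1]|^q ]^{1/q}. -/
/-! Write `r = min q 2` and `Sₙ` for the sum of `n` of the centred variables. By induction on `n`,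
`E|Sₙ|^q ≤ (L n)^(q/r) E|ξ - Eξ|^q` (a Marcinkiewicz–Zygmund type bound), and dividing by `n`
gives the rate `n^(1/r - 1) ≤ n^(1/s - 1)`. The induction step integrates the pointwise bound
`|a + b|^q ≤ |a|^q + q a |a|^(q-2) b + C (|a|^(q-r) |b|^r + |b|^q)` with `a = Sₙ` and `b` the next
summand: the linear term vanishes by independence and centring, and Lyapunov's inequality bounds
the cross term by `(E|Sₙ|^q)^(1 - r/q) (E|ξ - Eξ|^q)^(r/q)`. -/

open MeasureTheory ProbabilityTheory Real Set

theorem rpow_sub_two_le_two_rpow {q x : ℝ} (hq : 1 ≤ q) (hx : x ∈ Icc (1/2 : ℝ) 2) :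
    x ^ (q - 2) ≤ 2 ^ q := by
  obtain ⟨hx₁, hx₂⟩ := hx
  rcases le_total 2 q with h | h
  · calc x ^ (q - 2) ≤ 2 ^ (q - 2) := by gcongr
      _ ≤ 2 ^ q := rpow_le_rpow_of_exponent_le one_le_two (by linarith)
  · calc x ^ (q - 2) ≤ (1/2) ^ (q - 2) := rpow_le_rpow_of_nonpos (by norm_num) hx₁ (by linarith)
      _ = 2 ^ (2 - q) := by rw [one_div, inv_rpow zero_le_two, ← rpow_neg zero_le_two, neg_sub]
      _ ≤ 2 ^ q := rpow_le_rpow_of_exponent_le one_le_two (by linarith)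

theorem one_add_rpow_le_of_abs_le_half {q t : ℝ} (hq : 1 ≤ q) (ht : |t| ≤ 1 / 2) :
    (1 + t) ^ q ≤ 1 + q * t + q ^ 2 * 2 ^ q * t ^ 2 := by
  set C := q ^ 2 * 2 ^ q
  set G : ℝ → ℝ := fun u ↦ 1 + q * u + C * u ^ 2 - (1 + u) ^ q
  set G' : ℝ → ℝ := fun u ↦ q + C * (2 * u) - q * (1 + u) ^ (q - 1)
  set G'' : ℝ → ℝ := fun u ↦ C * 2 - q * ((q - 1) * (1 + u) ^ (q - 2))
  have hG : ∀ u, HasDerivAt G (G' u) u := fun u ↦ by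
    have := (((hasDerivAt_id u).const_mul q).const_add 1).add ((hasDerivAt_pow 2 u).const_mul C)
      |>.sub (((hasDerivAt_id u).const_add 1).rpow_const (Or.inr hq))
    exact this.congr_deriv (by simp [G'])
  have hG' : ∀ u, -1 < u → HasDerivAt G' (G'' u) u := fun u hu ↦ by
    have := (((hasDerivAt_id u).const_mul 2).const_mul C |>.const_add q).sub
      ((((hasDerivAt_id u).const_add 1).rpow_const (p := q - 1)
        (Or.inl (by simp; linarith))).const_mul q)
    exact this.congr_deriv (by rw [sub_sub]; norm_num [G''])
  have hG'' : ∀ u ∈ Ioo (-(1 / 2)) (1 / 2), 0 ≤ G'' u := fun u ⟨hu₁, hu₂⟩ ↦ by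
    have hpow := rpow_sub_two_le_two_rpow hq (x := 1 + u) ⟨by linarith, by linarith⟩
    have : 0 ≤ (1 + u) ^ (q - 2) := rpow_nonneg (by linarith) _
    have : (0 : ℝ) < 2 ^ q := by positivity
    simp only [G'', C]
    nlinarith [mul_le_mul_of_nonneg_left hpow (by nlinarith : 0 ≤ q * (q - 1))]
  have hconv : ConvexOn ℝ (Icc (-(1 / 2)) (1 / 2)) G := by
    refine convexOn_of_hasDerivWithinAt2_nonneg (convex_Icc _ _)
      (fun u _ ↦ (hG u).continuousAt.continuousWithinAt) (fun u _ ↦ (hG u).hasDerivWithinAt)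
      (fun u hu ↦ ?_) (by rwa [interior_Icc])
    rw [interior_Icc] at hu
    exact (hG' u (by linarith [hu.1])).hasDerivWithinAt
  have hmin : IsMinOn G (Icc (-(1 / 2)) (1 / 2)) 0 := by
    refine hconv.isMinOn_of_rightDeriv_eq_zero (by rw [interior_Icc]; norm_num) ?_
    rw [(hG 0).hasDerivWithinAt.derivWithin (uniqueDiffWithinAt_Ioi 0)]
    simp [G']
  have := hmin (abs_le.mp ht)
  simp only [G, mem_ofPred_eq] at this
  norm_num at this
  linarith

theorem abs_mul_abs_rpow_sub_two_le (a q : ℝ) : |a * |a| ^ (q - 2)| ≤ |a| ^ (q - 1) := by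
  rcases eq_or_ne a 0 with rfl | ha
  · simpa using rpow_nonneg le_rfl _
  rw [abs_mul, abs_of_nonneg (rpow_nonneg (abs_nonneg a) _), mul_comm,
    ← rpow_add_one (abs_ne_zero.mpr ha)]
  ring_nf; rfl

theorem sq_le_abs_rpow {t r : ℝ} (ht : |t| ≤ 1) (hr : r ≤ 2) : t ^ 2 ≤ |t| ^ r := by
  rcases eq_or_ne t 0 with rfl | ht0
  · simpa using rpow_nonneg le_rfl r
  calc t ^ 2 = |t| ^ (2 : ℝ) := by rw [rpow_two, sq_abs]
    _ ≤ |t| ^ r := rpow_le_rpow_of_exponent_ge (abs_pos.mpr ht0) ht hr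

theorem abs_add_rpow_le_of_abs_le_two_mul {q a b : ℝ} (hq : 1 ≤ q) (hab : |a| ≤ 2 * |b|) :
    |a + b| ^ q ≤ |a| ^ q + q * (a * |a| ^ (q - 2)) * b + (3 ^ q + q * 2 ^ q) * |b| ^ q := by
  have hq0 : 0 ≤ q := by linarith
  have hsum : |a + b| ^ q ≤ 3 ^ q * |b| ^ q := by
    rw [← mul_rpow (by norm_num) (abs_nonneg b)]
    gcongr
    linarith [abs_add_le a b]
  have hlin : -(q * (a * |a| ^ (q - 2)) * b) ≤ q * 2 ^ q * |b| ^ q := by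
    calc -(q * (a * |a| ^ (q - 2)) * b) ≤ |q * (a * |a| ^ (q - 2)) * b| := neg_le_abs _
      _ = q * (|a * |a| ^ (q - 2)| * |b|) := by
          rw [abs_mul, abs_mul, abs_of_nonneg hq0, mul_assoc]
      _ ≤ q * (|a| ^ (q - 1) * |b|) := by gcongr; exact abs_mul_abs_rpow_sub_two_le a q
      _ ≤ q * ((2 * |b|) ^ (q - 1) * |b|) := by gcongr
      _ = q * 2 ^ (q - 1) * |b| ^ q := by
          rw [mul_rpow zero_le_two (abs_nonneg b), ← sub_add_cancel q 1,
            rpow_add_one' (abs_nonneg b) (by simp; linarith), add_sub_cancel_right]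
          ring
      _ ≤ q * 2 ^ q * |b| ^ q := by
          gcongr
          exacts [one_le_two, by linarith]
  linarith [rpow_nonneg (abs_nonneg a) q]

theorem abs_add_rpow_le_of_two_mul_abs_lt {q r a b : ℝ} (hq : 1 ≤ q) (hr : r ≤ 2)
    (hab : 2 * |b| < |a|) :
    |a + b| ^ q ≤
      |a| ^ q + q * (a * |a| ^ (q - 2)) * b + q ^ 2 * 2 ^ q * (|a| ^ (q - r) * |b| ^ r) := by
  have hapos : 0 < |a| := by linarith [abs_nonneg b]
  set t := b / a
  have hb : b = a * t := (mul_div_cancel₀ b (abs_pos.mp hapos)).symm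
  have ht : |t| ≤ 1 / 2 := by
    rw [abs_div, div_le_iff₀ hapos]; linarith
  have h1t : 0 ≤ 1 + t := by linarith [neg_abs_le t]
  have hsum : |a + b| ^ q = |a| ^ q * (1 + t) ^ q := by
    rw [hb, show a + a * t = a * (1 + t) by ring, abs_mul, abs_of_nonneg h1t,
      mul_rpow (abs_nonneg a) h1t]
  have hlin : q * (a * |a| ^ (q - 2)) * b = |a| ^ q * (q * t) := by
    have : a * a * |a| ^ (q - 2) = |a| ^ q := by
      rw [← abs_mul_self, abs_mul, ← sq, ← rpow_natCast, ← rpow_add hapos]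
      norm_num
    rw [hb, ← this]; ring
  have hcross : |a| ^ (q - r) * |b| ^ r = |a| ^ q * |t| ^ r := by
    rw [hb, abs_mul, mul_rpow (abs_nonneg a) (abs_nonneg t), ← mul_assoc,
      ← rpow_add hapos, sub_add_cancel]
  have hsq := sq_le_abs_rpow (t := t) (by linarith) hr
  rw [hsum, hlin, hcross]
  calc |a| ^ q * (1 + t) ^ q ≤ |a| ^ q * (1 + q * t + q ^ 2 * 2 ^ q * t ^ 2) := by
        gcongr; exact one_add_rpow_le_of_abs_le_half hq ht
    _ ≤ |a| ^ q * (1 + q * t + q ^ 2 * 2 ^ q * |t| ^ r) := by gcongr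
    _ = _ := by ring

/-- `q * (a * |a| ^ (q - 2))` is the derivative of `|·| ^ q` at `a`, so this is a second-order
Taylor bound for `|·| ^ q` with a remainder of order `r`. -/
def AbsRpowAddBound (q r C : ℝ) : Prop :=
  ∀ a b : ℝ, |a + b| ^ q ≤
    |a| ^ q + q * (a * |a| ^ (q - 2)) * b + C * (|a| ^ (q - r) * |b| ^ r + |b| ^ q)

theorem exists_absRpowAddBound {q r : ℝ} (hq : 1 ≤ q) (hr : r ≤ 2) :
    ∃ C, 0 ≤ C ∧ AbsRpowAddBound q r C := by
  refine ⟨q ^ 2 * 2 ^ q + 3 ^ q + q * 2 ^ q, by positivity, fun a b ↦ ?_⟩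
  rcases le_or_gt |a| (2 * |b|) with hab | hab
  · have := abs_add_rpow_le_of_abs_le_two_mul hq hab
    have : 0 ≤ (3 ^ q + q * 2 ^ q) * (|a| ^ (q - r) * |b| ^ r) := by positivity
    have : 0 ≤ q ^ 2 * 2 ^ q * (|a| ^ (q - r) * |b| ^ r + |b| ^ q) := by positivity
    linarith
  · have := abs_add_rpow_le_of_two_mul_abs_lt hq hr hab
    have : 0 ≤ (3 ^ q + q * 2 ^ q) * (|a| ^ (q - r) * |b| ^ r + |b| ^ q) := by positivity
    have : 0 ≤ q ^ 2 * 2 ^ q * |b| ^ q := by positivity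
    linarith

theorem natCast_rpow_add_le_add_one_rpow {p : ℝ} (hp : 1 ≤ p) (n : ℕ) :
    (n : ℝ) ^ p + ((n : ℝ) ^ (p - 1) + 1) / 2 ≤ ((n : ℝ) + 1) ^ p := by
  rcases Nat.eq_zero_or_pos n with rfl | hn
  · simp [zero_rpow (by linarith : p ≠ 0)]
    linarith [zero_rpow_le_one (p - 1)]
  have hn0 : (0 : ℝ) < n := by exact_mod_cast hn
  have hbern : (n : ℝ) ^ p + p * (n : ℝ) ^ (p - 1) ≤ ((n : ℝ) + 1) ^ p := by
    calc (n : ℝ) ^ p + p * (n : ℝ) ^ (p - 1) = (n : ℝ) ^ p * (1 + p * (1 / n)) := by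
          rw [rpow_sub_one hn0.ne']; field_simp
      _ ≤ (n : ℝ) ^ p * (1 + 1 / n) ^ p := by
          gcongr
          exact one_add_mul_self_le_rpow_one_add (by linarith [one_div_pos.mpr hn0]) hp
      _ = ((n : ℝ) + 1) ^ p := by
          rw [← mul_rpow hn0.le (by positivity)]; field_simp
  have h1 : 1 ≤ (n : ℝ) ^ (p - 1) := one_le_rpow (by exact_mod_cast hn) (by linarith)
  nlinarith

/-- With `L = 2 * C + 2` we have `C ≤ L / 2 ≤ L ^ p / 2`, so both error terms are absorbed by
`(n + 1) ^ p - n ^ p ≥ (n ^ (p - 1) + 1) / 2`. -/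
theorem add_mul_rpow_le_mul_add_one_rpow {p C a b : ℝ} (hp : 1 ≤ p) (hC : 0 ≤ C) (ha : 0 ≤ a)
    (hb : 0 ≤ b) {n : ℕ} (han : a ≤ ((2 * C + 2) * n) ^ p * b) :
    a + C * (a ^ (1 - 1 / p) * b ^ (1 / p) + b) ≤ ((2 * C + 2) * (n + 1)) ^ p * b := by
  set L := 2 * C + 2
  have hL : 1 ≤ L := by linarith
  have hp0 : 0 < p := by linarith
  have hcross : a ^ (1 - 1 / p) * b ^ (1 / p) ≤ L ^ (p - 1) * (n : ℝ) ^ (p - 1) * b := by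
    calc a ^ (1 - 1 / p) * b ^ (1 / p) ≤ ((L * n) ^ p * b) ^ (1 - 1 / p) * b ^ (1 / p) := by
          gcongr
          exact sub_nonneg.mpr (div_le_one_of_le₀ hp hp0.le)
      _ = L ^ (p - 1) * (n : ℝ) ^ (p - 1) * b := by
          rw [mul_rpow (by positivity) hb, ← rpow_mul (by positivity), mul_assoc,
            ← rpow_add' hb (by simp), mul_rpow (by positivity) (by positivity)]
          field_simp
          simp [hp0.ne']
  have hLp : L ≤ L ^ p := by simpa using rpow_le_rpow_of_exponent_le hL hp
  have hLp' : L ^ p = L * L ^ (p - 1) := by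
    rw [← rpow_one_add' (by positivity) (by simp; linarith)]; ring_nf
  have hbern := natCast_rpow_add_le_add_one_rpow hp n
  rw [mul_rpow (by positivity) (by positivity)] at han ⊢
  have hC₁ : C * (L ^ (p - 1) * (n : ℝ) ^ (p - 1) * b) ≤ L ^ p * ((n : ℝ) ^ (p - 1) * b) / 2 := by
    have : 0 ≤ (L / 2 - C) * (L ^ (p - 1) * ((n : ℝ) ^ (p - 1) * b)) := by
      exact mul_nonneg (by linarith) (by positivity)
    rw [hLp']; nlinarith
  have hC₂ : C * b ≤ L ^ p * b / 2 := by nlinarith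
  have := mul_le_mul_of_nonneg_left hbern (by positivity : 0 ≤ L ^ p * b)
  nlinarith [mul_le_mul_of_nonneg_left hcross hC]

section Moments

variable {Ω : Type*} [MeasurableSpace Ω] {μ : Measure Ω} {X Y : Ω → ℝ} {p q : ℝ}

theorem memLp_ofReal_iff_integrable_abs_rpow (hq : 0 < q) (hX : AEStronglyMeasurable X μ) :
    MemLp X (ENNReal.ofReal q) μ ↔ Integrable (fun ω ↦ |X ω| ^ q) μ := by
  rw [← integrable_norm_rpow_iff hX (by simpa using hq) ENNReal.ofReal_ne_top,
    ENNReal.toReal_ofReal hq.le]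
  simp only [Real.norm_eq_abs]

theorem MeasureTheory.MemLp.integrable_abs_rpow [IsFiniteMeasure μ]
    (hX : MemLp X (ENNReal.ofReal q) μ) (hq : 0 < q) (hp : 0 ≤ p) (hpq : p ≤ q) :
    Integrable (fun ω ↦ |X ω| ^ p) μ := by
  simpa only [Real.norm_eq_abs] using integrable_norm_rpow_of_le hX.1 hp hq.le hpq
    ((memLp_ofReal_iff_integrable_abs_rpow hq hX.1).mp hX)

theorem integral_abs_rpow_le_integral_abs_rpow_rpow [IsProbabilityMeasure μ]
    (hX : MemLp X (ENNReal.ofReal q) μ) (hq : 0 < q) (hp : 0 ≤ p) (hpq : p ≤ q) :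
    ∫ ω, |X ω| ^ p ∂μ ≤ (∫ ω, |X ω| ^ q ∂μ) ^ (p / q) := by
  have hpq' : 0 ≤ p / q := div_nonneg hp hq.le
  have hcomp : ∀ ω, (|X ω| ^ q) ^ (p / q) = |X ω| ^ p := fun ω ↦ by
    rw [← rpow_mul (abs_nonneg _), mul_div_cancel₀ p hq.ne']
  have := (concaveOn_rpow hpq' (div_le_one_of_le₀ hpq hq.le)).le_map_integral
    (continuous_rpow_const hpq').continuousOn isClosed_Ici
    (.of_forall fun ω ↦ rpow_nonneg (abs_nonneg (X ω)) q) (hX.integrable_abs_rpow hq hq.le le_rfl)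
    (by simpa only [Function.comp_def, hcomp] using hX.integrable_abs_rpow hq hp hpq)
  simpa only [hcomp] using this

theorem integral_abs_add_rpow_le [IsProbabilityMeasure μ] {r C : ℝ} (hq : 1 ≤ q) (hr : 0 ≤ r)
    (hrq : r ≤ q) (hA : AbsRpowAddBound q r C)
    (hX : MemLp X (ENNReal.ofReal q) μ) (hY : MemLp Y (ENNReal.ofReal q) μ)
    (hXY : IndepFun X Y μ) (hY₀ : ∫ ω, Y ω ∂μ = 0) :
    ∫ ω, |X ω + Y ω| ^ q ∂μ ≤ ∫ ω, |X ω| ^ q ∂μ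
      + C * ((∫ ω, |X ω| ^ (q - r) ∂μ) * (∫ ω, |Y ω| ^ r ∂μ) + ∫ ω, |Y ω| ^ q ∂μ) := by
  have hq0 : 0 < q := by linarith
  set φ : ℝ → ℝ := fun x ↦ q * (x * |x| ^ (q - 2))
  have hφ : Measurable φ := by fun_prop
  have hXq := hX.integrable_abs_rpow hq0 hq0.le le_rfl
  have hYq := hY.integrable_abs_rpow hq0 hq0.le le_rfl
  have hXqr := hX.integrable_abs_rpow hq0 (sub_nonneg.mpr hrq) (sub_le_self q hr)
  have hYr := hY.integrable_abs_rpow hq0 hr hrq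
  have hY1 : Integrable Y μ := hY.integrable (by simpa using hq)
  have hφX : Integrable (fun ω ↦ φ (X ω)) μ := by
    refine ((hX.integrable_abs_rpow (p := q - 1) hq0 (by linarith) (by linarith)).const_mul q).mono'
      (hφ.comp_aemeasurable hX.1.aemeasurable).aestronglyMeasurable (.of_forall fun ω ↦ ?_)
    rw [Real.norm_eq_abs, abs_mul, abs_of_nonneg hq0.le]
    exact mul_le_mul_of_nonneg_left (abs_mul_abs_rpow_sub_two_le (X ω) q) hq0.le
  have hind₁ : IndepFun (fun ω ↦ φ (X ω)) Y μ := hXY.comp hφ measurable_id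
  have hind₂ : IndepFun (fun ω ↦ |X ω| ^ (q - r)) (fun ω ↦ |Y ω| ^ r) μ :=
    hXY.comp (φ := fun x ↦ |x| ^ (q - r)) (ψ := fun x ↦ |x| ^ r) (by fun_prop) (by fun_prop)
  have hprod₁ : Integrable (fun ω ↦ φ (X ω) * Y ω) μ := hind₁.integrable_mul hφX hY1
  have hprod₂ : Integrable (fun ω ↦ |X ω| ^ (q - r) * |Y ω| ^ r) μ :=
    hind₂.integrable_mul hXqr hYr
  have hmain : Integrable (fun ω ↦ |X ω| ^ q + φ (X ω) * Y ω) μ := hXq.add hprod₁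
  have hrest : Integrable (fun ω ↦ C * (|X ω| ^ (q - r) * |Y ω| ^ r + |Y ω| ^ q)) μ :=
    (hprod₂.add hYq).const_mul C
  calc ∫ ω, |X ω + Y ω| ^ q ∂μ
      ≤ ∫ ω, |X ω| ^ q + φ (X ω) * Y ω + C * (|X ω| ^ (q - r) * |Y ω| ^ r + |Y ω| ^ q) ∂μ :=
        integral_mono ((hX.add hY).integrable_abs_rpow hq0 hq0.le le_rfl)
          (hmain.add hrest) fun ω ↦ hA (X ω) (Y ω)
    _ = ∫ ω, |X ω| ^ q ∂μ
      + C * ((∫ ω, |X ω| ^ (q - r) ∂μ) * (∫ ω, |Y ω| ^ r ∂μ) + ∫ ω, |Y ω| ^ q ∂μ) := by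
        rw [integral_add hmain hrest, integral_add hXq hprod₁,
          integral_const_mul, integral_add hprod₂ hYq,
          hind₁.integral_fun_mul_eq_mul_integral hφX.1 hY1.1,
          hind₂.integral_fun_mul_eq_mul_integral hXqr.1 hYr.1, hY₀, mul_zero, add_zero]

theorem integral_abs_sum_rpow_le [IsProbabilityMeasure μ] {ι : Type*} {r C b : ℝ} (hq : 1 ≤ q)
    (hr : 0 < r) (hrq : r ≤ q) (hC : 0 ≤ C) (hA : AbsRpowAddBound q r C)
    {X : ι → Ω → ℝ} (hmeas : ∀ i, Measurable (X i)) (hindep : iIndepFun X μ)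
    (hLq : ∀ i, MemLp (X i) (ENNReal.ofReal q) μ) (hmean : ∀ i, ∫ ω, X i ω ∂μ = 0)
    (hb : ∀ i, ∫ ω, |X i ω| ^ q ∂μ ≤ b) (s : Finset ι) :
    ∫ ω, |∑ i ∈ s, X i ω| ^ q ∂μ ≤ ((2 * C + 2) * s.card) ^ (q / r) * b := by
  classical
  have hq0 : 0 < q := by linarith
  induction s using Finset.induction_on with
  | empty => simp [zero_rpow hq0.ne', zero_rpow (div_pos hq0 hr).ne']
  | @insert i s hi ih =>
    set S := fun ω ↦ ∑ j ∈ s, X j ω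
    have hS : MemLp S (ENNReal.ofReal q) μ := memLp_finsetSum s fun j _ ↦ hLq j
    have hSi : IndepFun S (X i) μ := by
      simpa only [S, ← Finset.sum_fn] using hindep.indepFun_finsetSum_of_notMem hmeas hi
    have hb0 : 0 ≤ b := (integral_nonneg fun ω ↦ by positivity).trans (hb i)
    have ha0 : 0 ≤ ∫ ω, |S ω| ^ q ∂μ := integral_nonneg fun ω ↦ by positivity
    have hSqr := integral_abs_rpow_le_integral_abs_rpow_rpow hS hq0 (sub_nonneg.mpr hrq)
      (sub_le_self q hr.le)
    have hXr : ∫ ω, |X i ω| ^ r ∂μ ≤ b ^ (r / q) :=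
      (integral_abs_rpow_le_integral_abs_rpow_rpow (hLq i) hq0 hr.le hrq).trans
        (by gcongr; exact hb i)
    calc ∫ ω, |∑ j ∈ insert i s, X j ω| ^ q ∂μ = ∫ ω, |S ω + X i ω| ^ q ∂μ := by
          simp [Finset.sum_insert hi, add_comm, S]
      _ ≤ ∫ ω, |S ω| ^ q ∂μ + C * ((∫ ω, |S ω| ^ (q - r) ∂μ) * (∫ ω, |X i ω| ^ r ∂μ)
            + ∫ ω, |X i ω| ^ q ∂μ) :=
          integral_abs_add_rpow_le hq hr.le hrq hA hS (hLq i) hSi (hmean i)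
      _ ≤ ∫ ω, |S ω| ^ q ∂μ + C * ((∫ ω, |S ω| ^ q ∂μ) ^ (1 - 1 / (q / r)) * b ^ (1 / (q / r))
            + b) := by
          rw [one_div_div, show 1 - r / q = (q - r) / q by field_simp]
          gcongr
          exact hb i
      _ ≤ ((2 * C + 2) * (s.card + 1)) ^ (q / r) * b :=
          add_mul_rpow_le_mul_add_one_rpow ((one_le_div hr).mpr hrq) hC ha0 hb0 ih
      _ = ((2 * C + 2) * (insert i s).card) ^ (q / r) * b := by
          rw [Finset.card_insert_of_notMem hi]; push_cast; rfl

theorem rpow_integral_abs_sum_sub_integral_le [IsProbabilityMeasure μ] {ι : Type*} {r C : ℝ}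
    (hq : 1 ≤ q) (hr : 0 < r) (hrq : r ≤ q) (hC : 0 ≤ C) (hA : AbsRpowAddBound q r C)
    {ξ : ι → Ω → ℝ} {i₀ : ι} (hmeas : ∀ i, Measurable (ξ i)) (hindep : iIndepFun ξ μ)
    (hident : ∀ i, IdentDistrib (ξ i) (ξ i₀) μ μ)
    (hLq : MemLp (ξ i₀) (ENNReal.ofReal q) μ) (s : Finset ι) :
    (∫ ω, |∑ i ∈ s, (ξ i ω - ∫ ω', ξ i₀ ω' ∂μ)| ^ q ∂μ) ^ (1 / q)
      ≤ ((2 * C + 2) * s.card) ^ (1 / r) * (∫ ω, |ξ i₀ ω - ∫ ω', ξ i₀ ω' ∂μ| ^ q ∂μ) ^ (1 / q) := by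
  have hq0 : 0 < q := by linarith
  set m := ∫ ω', ξ i₀ ω' ∂μ
  have hcent : ∀ i, IdentDistrib (fun ω ↦ ξ i ω - m) (fun ω ↦ ξ i₀ ω - m) μ μ := fun i ↦
    (hident i).comp (measurable_id.sub_const m)
  have hmean : ∀ i, ∫ ω, ξ i ω - m ∂μ = 0 := fun i ↦ by
    rw [integral_sub ((hident i).integrable_iff.mpr (hLq.integrable (by simpa using hq)))
      (integrable_const m), (hident i).integral_eq]
    simp [m]
  have hsum := integral_abs_sum_rpow_le hq hr hrq hC hA (fun i ↦ (hmeas i).sub_const m)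
    (hindep.comp _ fun _ ↦ measurable_id.sub_const m)
    (fun i ↦ (hcent i).memLp_iff.mpr (hLq.sub (memLp_const m))) hmean
    (fun i ↦ ((hcent i).comp (measurable_id.abs.pow_const q)).integral_eq.le) s
  calc (∫ ω, |∑ i ∈ s, (ξ i ω - m)| ^ q ∂μ) ^ (1 / q)
      ≤ (((2 * C + 2) * s.card) ^ (q / r) * ∫ ω, |ξ i₀ ω - m| ^ q ∂μ) ^ (1 / q) := by
        gcongr
        exact hsum
    _ = ((2 * C + 2) * s.card) ^ (1 / r) * (∫ ω, |ξ i₀ ω - m| ^ q ∂μ) ^ (1 / q) := by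
        rw [mul_rpow (by positivity) (integral_nonneg fun ω ↦ by positivity),
          ← rpow_mul (by positivity), show q / r * (1 / q) = 1 / r by field_simp]

end Moments

theorem rpow_integral_abs_sub_average {Ω : Type*} [MeasurableSpace Ω] {μ : Measure Ω} {q : ℝ}
    (hq : 0 < q) {M : ℕ} (hM : 0 < M) (m : ℝ) (ξ : Fin M → Ω → ℝ) :
    (∫ ω, |m - (1 / (M : ℝ)) * ∑ j, ξ j ω| ^ q ∂μ) ^ (1 / q)
      = (M : ℝ)⁻¹ * (∫ ω, |∑ j, (ξ j ω - m)| ^ q ∂μ) ^ (1 / q) := by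
  have hM0 : (0 : ℝ) < M := by exact_mod_cast hM
  have hpt : ∀ ω, |m - (1 / (M : ℝ)) * ∑ j, ξ j ω| ^ q
      = (M : ℝ)⁻¹ ^ q * |∑ j, (ξ j ω - m)| ^ q := fun ω ↦ by
    have : m - (1 / (M : ℝ)) * ∑ j, ξ j ω = -((M : ℝ)⁻¹ * ∑ j, (ξ j ω - m)) := by
      rw [Finset.sum_sub_distrib, Finset.sum_const, Finset.card_univ, Fintype.card_fin,
        nsmul_eq_mul]
      field_simp
      ring
    rw [this, abs_neg, abs_mul, abs_of_pos (inv_pos.mpr hM0),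
      mul_rpow (by positivity) (abs_nonneg _)]
  simp_rw [hpt, integral_const_mul]
  rw [mul_rpow (by positivity) (integral_nonneg fun ω ↦ by positivity),
    ← rpow_mul (by positivity), mul_one_div_cancel hq.ne', rpow_one]

theorem inv_mul_mul_rpow_le_div_rpow {M L r s : ℝ} (hM : 1 ≤ M) (hL : 0 ≤ L) (hs : 0 < s)
    (hsr : s ≤ r) : M⁻¹ * (L * M) ^ (1 / r) ≤ L ^ (1 / r) / M ^ (1 - 1 / s) := by
  have hM0 : 0 < M := by linarith
  calc M⁻¹ * (L * M) ^ (1 / r) = M⁻¹ * (L ^ (1 / r) * M ^ (1 / r)) := by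
        rw [mul_rpow hL hM0.le]
    _ ≤ M⁻¹ * (L ^ (1 / r) * M ^ (1 / s)) := by gcongr
    _ = L ^ (1 / r) / M ^ (1 - 1 / s) := by
        rw [rpow_sub hM0, rpow_one]
        field_simp

theorem stmt8 (q s : ℝ) (hs : s ∈ Set.Icc (1:ℝ) 2) (hq : s ≤ q) :
    ∃ Θ : ℝ, 0 < Θ ∧
      ∀ (Ω : Type) (_ : MeasurableSpace Ω) (μ : Measure Ω),
        IsProbabilityMeasure μ →
        ∀ (M : ℕ) (hM : 0 < M) (ξ : Fin M → Ω → ℝ),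
          (∀ j, Measurable (ξ j)) →
          iIndepFun ξ μ →
          (∀ j, Measure.map (ξ j) μ = Measure.map (ξ ⟨0, hM⟩) μ) →
          (∀ j, Integrable (ξ j) μ) →
          Integrable (fun ω => |ξ ⟨0, hM⟩ ω| ^ q) μ →
          (∫ ω, |(∫ ω', ξ ⟨0, hM⟩ ω' ∂μ) - (1 / (M:ℝ)) * ∑ j, ξ j ω| ^ q ∂μ) ^ (1/q)
            ≤ Θ / (M : ℝ) ^ (1 - 1/s) *
              (∫ ω, |ξ ⟨0, hM⟩ ω - ∫ ω', ξ ⟨0, hM⟩ ω' ∂μ| ^ q ∂μ) ^ (1/q) := by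
  obtain ⟨hs₁, hs₂⟩ := hs
  have hq₁ : 1 ≤ q := hs₁.trans hq
  obtain ⟨C, hC, hA⟩ := exists_absRpowAddBound hq₁ (min_le_right q 2)
  refine ⟨(2 * C + 2) ^ (1 / min q 2), by positivity, ?_⟩
  intro Ω _ μ _ M hM ξ hmeas hindep hident _ hint
  have hsum := rpow_integral_abs_sum_sub_integral_le hq₁ (lt_min (by linarith) two_pos)
    (min_le_left q 2) hC hA hmeas hindep
    (fun j ↦ ⟨(hmeas j).aemeasurable, (hmeas _).aemeasurable, hident j⟩)
    ((memLp_ofReal_iff_integrable_abs_rpow (by linarith) (hmeas _).aestronglyMeasurable).mpr hint)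
    Finset.univ
  rw [Finset.card_univ, Fintype.card_fin] at hsum
  rw [rpow_integral_abs_sub_average (by linarith) hM]
  calc _ ≤ (M : ℝ)⁻¹ * (((2 * C + 2) * M) ^ (1 / min q 2)
          * (∫ ω, |ξ ⟨0, hM⟩ ω - ∫ ω', ξ ⟨0, hM⟩ ω' ∂μ| ^ q ∂μ) ^ (1 / q)) := by
        gcongr
    _ ≤ _ := by
        rw [← mul_assoc]
        gcongr
        exact inv_mul_mul_rpow_le_div_rpow (by exact_mod_cast hM) (by positivity) (by linarith)
          (le_min hq hs₂)
end

section
/- Let (I_n)_{n≥0} be a nondecreasing sequence of times with I_0 = 0, and let (X_t)_{t≥0} be a path in ℝ^d with exit time σ_D = inf{t ≥ 0 : X_t ∉ D} for an open set D. Suppose N = min{n ∈ ℕ : X_{I_n} ∉ D} is finite, X_{I_n} ∈ D for all n < N, and for each n, I_n = I_{n-1} + τ_n where τ_n = inf{t ≥ 0 : X_{t+I_{n-1}} ∉ B_n} for some open ball B_n ⊆ D containing X_{I_{n-1}}. Then I_N = σ_D. -/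
theorem stmt16 (d : ℕ) (D : Set (EuclideanSpace ℝ (Fin d))) (hD : IsOpen D)
    (X : ℝ → EuclideanSpace ℝ (Fin d))
    (I τ : ℕ → ℝ) (hI0 : I 0 = 0) (hImono : Monotone I)
    (N : ℕ) (hN1 : 1 ≤ N)
    (hexit : X (I N) ∉ D) (hin : ∀ n, n < N → X (I n) ∈ D)
    (B : ℕ → Set (EuclideanSpace ℝ (Fin d)))
    (hball : ∀ n, 1 ≤ n → n ≤ N → ∃ (c : EuclideanSpace ℝ (Fin d)) (ρ : ℝ), 0 < ρ ∧
      B n = Metric.ball c ρ ∧ B n ⊆ D ∧ X (I (n-1)) ∈ B n)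
    (hIrec : ∀ n, 1 ≤ n → n ≤ N → I n = I (n-1) + τ n)
    (hτ : ∀ n, 1 ≤ n → n ≤ N → τ n = sInf {t : ℝ | 0 ≤ t ∧ X (t + I (n-1)) ∉ B n}) :
    I N = sInf {t : ℝ | 0 ≤ t ∧ X t ∉ D} := by
  have key : ∀ n, n ≤ N → ∀ t, 0 ≤ t → t < I n → X t ∈ D := by
    intro n
    induction n with
    | zero => intro _ t ht htl; rw [hI0] at htl; linarith
    | succ n ih =>
      intro hle t ht htl
      by_cases h : t < I n
      · exact ih (Nat.le_of_succ_le hle) t ht h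
      · push_neg at h
        have h1 : 1 ≤ n + 1 := Nat.succ_le_succ (Nat.zero_le n)
        obtain ⟨c, ρ, hρ, hBeq, hBsub, hXin⟩ := hball (n+1) h1 hle
        have hrec := hIrec (n+1) h1 hle
        have hτeq := hτ (n+1) h1 hle
        simp only [Nat.add_sub_cancel] at hrec hτeq
        have hs0 : 0 ≤ t - I n := sub_nonneg.2 h
        have hsτ : t - I n < τ (n+1) := by rw [hrec] at htl; linarith
        have hmemB : X (t - I n + I n) ∈ B (n+1) := by
          by_contra hc
          have hmem : t - I n ∈ {u : ℝ | 0 ≤ u ∧ X (u + I n) ∉ B (n+1)} := ⟨hs0, hc⟩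
          have hle' : sInf {u : ℝ | 0 ≤ u ∧ X (u + I n) ∉ B (n+1)} ≤ t - I n :=
            csInf_le ⟨0, fun x hx => hx.1⟩ hmem
          rw [hτeq] at hsτ
          linarith
        have : X t ∈ B (n+1) := by rwa [show t - I n + I n = t by ring] at hmemB
        exact hBsub this
  have hINnn : 0 ≤ I N := by
    have := hImono (Nat.zero_le N); rwa [hI0] at this
  have hmemS : I N ∈ {t : ℝ | 0 ≤ t ∧ X t ∉ D} := ⟨hINnn, hexit⟩
  refine le_antisymm ?_ (csInf_le ⟨0, fun x hx => hx.1⟩ hmemS)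
  exact le_csInf ⟨I N, hmemS⟩ fun t ht =>
    le_of_not_gt fun hc => ht.2 (key N le_rfl t ht.1 hc)
end
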